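/- Under the asymptotics γ'(x) = 1 + a(1−δ)x^{−δ} + o(x^{−δ}) with a > 0, δ > 0, δ ≠ 1, and γ strictly increasing with γ(−1) = 1 and γ(x) > x, Abel's equation φ(γ(x)) = φ(x) + 1 has a strictly positive, strictly increasing C¹ solution φ on [−1,∞). -/

import Mathlib

open Real Set Filter Asymptotics Topology Function

/-!
Since `γ' → 1`, `γ'` is positive on `[p, ∞)` for `p = γ^[K] (-1)` with `K` large. There `γ`
extends to an order automorphism `e` of `ℝ`, and transporting a bump on the fundamental domain
`[p, γ p]` along the iterates of `e` gives a continuous density `ψ ≥ 0`, positive between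
consecutive points of the orbit of `p`, with `ψ (γ x) γ' x = ψ x`; its normalised primitive
solves Abel's equation on `[p, ∞)`. Precomposing with `γ^[K]` carries this solution back to
`[-1, ∞)`; this step needs no division by `γ'`, which may vanish there.
-/

theorem StrictMonoOn.iterate {α : Type*} [Preorder α] {f : α → α} {s : Set α}
    (hf : StrictMonoOn f s) (hs : MapsTo f s s) : ∀ n, StrictMonoOn f^[n] s
  | 0 => strictMonoOn_id
  | n + 1 => (hf.iterate hs n).comp hf hs

theorem mapsTo_Ici_of_lt {α : Type*} [Preorder α] {f : α → α} {p : α}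
    (hlt : ∀ x ∈ Ici p, x < f x) : MapsTo f (Ici p) (Ici p) :=
  fun x hx => (mem_Ici.1 hx).trans (hlt x hx).le

section Iterate

variable {f f' : ℝ → ℝ} {s : Set ℝ}

def iterateDeriv (f f' : ℝ → ℝ) (n : ℕ) (x : ℝ) : ℝ :=
  ∏ k ∈ Finset.range n, f' (f^[k] x)

theorem iterateDeriv_succ (n : ℕ) (x : ℝ) :
    iterateDeriv f f' (n + 1) x = iterateDeriv f f' n x * f' (f^[n] x) :=
  Finset.prod_range_succ _ n

theorem hasDerivAt_iterate (hs : MapsTo f s s) (hf : ∀ x ∈ s, HasDerivAt f (f' x) x) :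
    ∀ n, ∀ x ∈ s, HasDerivAt f^[n] (iterateDeriv f f' n x) x
  | 0, x, _ => by simpa [iterateDeriv] using hasDerivAt_id x
  | n + 1, x, hx => by
    rw [iterate_succ', iterateDeriv_succ, mul_comm]
    exact (hf _ (hs.iterate n hx)).comp x (hasDerivAt_iterate hs hf n x hx)

theorem continuousOn_iterateDeriv (hs : MapsTo f s s) (hf : ContinuousOn f s)
    (hf' : ContinuousOn f' s) (n : ℕ) : ContinuousOn (iterateDeriv f f' n) s :=
  continuousOn_finsetProd _ fun k _ => hf'.comp (hf.iterate hs k) (hs.iterate k)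

theorem iterateDeriv_pos (hs : MapsTo f s s) (hpos : ∀ x ∈ s, 0 < f' x) (n : ℕ) {x : ℝ}
    (hx : x ∈ s) : 0 < iterateDeriv f f' n x :=
  Finset.prod_pos fun k _ => hpos _ (hs.iterate k hx)

theorem tendsto_iterate_atTop_of_lt {p : ℝ} (hf : ContinuousOn f (Ici p))
    (hlt : ∀ x ∈ Ici p, x < f x) : Tendsto (fun n => f^[n] p) atTop atTop := by
  have hmem : ∀ n, f^[n] p ∈ Ici p := fun n => (mapsTo_Ici_of_lt hlt).iterate n self_mem_Ici
  have hmono : StrictMono fun n => f^[n] p := strictMono_nat_of_lt_succ fun n => by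
    rw [iterate_succ_apply']
    exact hlt _ (hmem n)
  refine (tendsto_atTop_of_monotone hmono.monotone).resolve_right fun ⟨l, hl⟩ => ?_
  have hl1 : f p ≤ l := hmono.monotone.ge_of_tendsto hl 1
  have hp : p < l := (hlt p self_mem_Ici).trans_le hl1
  have hfix : IsFixedPt f l :=
    isFixedPt_of_tendsto_iterate hl (hf.continuousAt (Ici_mem_nhds hp))
  exact (hlt l hp.le).ne' hfix

end Iterate

theorem exists_mem_Ico_of_tendsto_atTop {α : Type*} [LinearOrder α] [NoMaxOrder α]
    {T : ℕ → α} (hT : Tendsto T atTop atTop) {x : α} (hx : T 0 ≤ x) :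
    ∃ n, x ∈ Ico (T n) (T (n + 1)) := by
  classical
  have hex : ∃ n, x < T n := (hT.eventually_gt_atTop x).exists
  have h0 : Nat.find hex ≠ 0 := fun h => (h ▸ Nat.find_spec hex).not_ge hx
  obtain ⟨n, hn⟩ := Nat.exists_eq_succ_of_ne_zero h0
  refine ⟨n, not_lt.1 (Nat.find_min hex ?_), ?_⟩
  · rw [hn]; exact n.lt_succ_self
  · rw [← Nat.succ_eq_add_one, ← hn]; exact Nat.find_spec hex

theorem OrderIso.symm_iterate_mem_Ioo_iff {α : Type*} [LinearOrder α] (e : α ≃o α) (n : ℕ)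
    {p x : α} : e.symm^[n] x ∈ Ioo p (e p) ↔ x ∈ Ioo (e^[n] p) (e^[n + 1] p) := by
  have hx : e^[n] (e.symm^[n] x) = x := (RightInverse.iterate e.apply_symm_apply n) x
  conv_rhs => rw [← hx]
  rw [iterate_succ_apply, mem_Ioo, mem_Ioo, (e.strictMono.iterate n).lt_iff_lt,
    (e.strictMono.iterate n).lt_iff_lt]

theorem exists_orderIso_eqOn {γ : ℝ → ℝ} {p : ℝ} (hγ : ContinuousOn γ (Ici p))
    (hmono : StrictMonoOn γ (Ici p)) (hlt : ∀ x ∈ Ici p, x < γ x) :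
    ∃ e : ℝ ≃o ℝ, EqOn e γ (Ici p) := by
  -- `γ` on `[p, ∞)`, the translation `x ↦ x + (γ p - p)` on `(-∞, p]`
  set g : ℝ → ℝ := fun x => γ (max x p) + (min x p - p)
  have hg : Continuous g :=
    (hγ.comp_continuous (continuous_id.max continuous_const) fun x => le_max_right x p).add
      ((continuous_id.min continuous_const).sub continuous_const)
  have hgx : ∀ x, x < g x := by
    intro x
    rcases le_total p x with h | h
    · simpa [g, max_eq_left h, min_eq_right h] using hlt x h
    · have := hlt p self_mem_Ici
      simp only [g, max_eq_right h, min_eq_left h]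
      linarith
  have hbot : g =ᶠ[atBot] fun x => x + (γ p - p) := by
    filter_upwards [eventually_le_atBot p] with x hx
    simp only [g, max_eq_right hx, min_eq_left hx]
    ring
  have hg_mono : StrictMono g := by
    intro x y hxy
    rcases lt_or_ge x p with hx | hx
    · have h1 : γ (max x p) ≤ γ (max y p) :=
        hmono.monotoneOn (le_max_right x p) (le_max_right y p) (max_le_max_right p hxy.le)
      have h2 : min x p < min y p := lt_min (min_lt_of_left_lt hxy) (min_lt_of_left_lt hx)
      simp only [g]
      linarith
    · simp only [g, max_eq_left hx, max_eq_left (hx.trans hxy.le), min_eq_right hx,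
        min_eq_right (hx.trans hxy.le), add_lt_add_iff_right]
      exact hmono hx (hx.trans hxy.le) hxy
  have hg_surj : Surjective g :=
    hg.surjective (tendsto_atTop_mono (fun x => (hgx x).le) tendsto_id)
      ((tendsto_atBot_add_const_right _ _ tendsto_id).congr' hbot.symm)
  refine ⟨hg_mono.orderIsoOfSurjective g hg_surj, fun x hx => ?_⟩
  simp [g, max_eq_left (mem_Ici.1 hx), min_eq_right (mem_Ici.1 hx)]

structure IsC1AbelSolution (γ φ φ' : ℝ → ℝ) (s : Set ℝ) : Prop where
  strictMonoOn : StrictMonoOn φ s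
  hasDerivAt : ∀ x ∈ s, HasDerivAt φ (φ' x) x
  continuousOn_deriv : ContinuousOn φ' s
  abel : ∀ x ∈ s, φ (γ x) = φ x + 1

theorem IsC1AbelSolution.add_const {γ φ φ' : ℝ → ℝ} {s : Set ℝ}
    (h : IsC1AbelSolution γ φ φ' s) (c : ℝ) :
    IsC1AbelSolution γ (fun x => φ x + c) φ' s where
  strictMonoOn _ hx _ hy hxy := add_lt_add_left (h.strictMonoOn hx hy hxy) c
  hasDerivAt x hx := (h.hasDerivAt x hx).add_const c
  continuousOn_deriv := h.continuousOn_deriv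
  abel x hx := by rw [h.abel x hx]; ring

theorem IsC1AbelSolution.comp_iterate {γ γ' φ φ' : ℝ → ℝ} {s t : Set ℝ}
    (h : IsC1AbelSolution γ φ φ' t) (hs : MapsTo γ s s) (n : ℕ) (hst : MapsTo γ^[n] s t)
    (hγ : ∀ x ∈ s, HasDerivAt γ (γ' x) x) (hγ' : ContinuousOn γ' s)
    (hmono : StrictMonoOn γ s) :
    IsC1AbelSolution γ (φ ∘ γ^[n]) (fun x => φ' (γ^[n] x) * iterateDeriv γ γ' n x) s where
  strictMonoOn := h.strictMonoOn.comp (hmono.iterate hs n) hst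
  hasDerivAt x hx := (h.hasDerivAt _ (hst hx)).comp x (hasDerivAt_iterate hs hγ n x hx)
  continuousOn_deriv := by
    have hγc : ContinuousOn γ s := fun x hx => (hγ x hx).continuousAt.continuousWithinAt
    exact (h.continuousOn_deriv.comp (hγc.iterate hs n) hst).mul
      (continuousOn_iterateDeriv hs hγc hγ' n)
  abel x hx := by
    rw [comp_apply, comp_apply, ← iterate_succ_apply, iterate_succ_apply']
    exact h.abel _ (hst hx)

theorem isC1AbelSolution_of_density {γ γ' ψ : ℝ → ℝ} {p : ℝ}
    (hγ : ∀ x ∈ Ici p, HasDerivWithinAt γ (γ' x) (Ici p) x) (hp : p < γ p)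
    (hψ : Continuous ψ) (hψγ : ∀ x ∈ Ici p, ψ (γ x) * γ' x = ψ x)
    (hψpos : ∀ x y, p ≤ x → x < y → 0 < ∫ t in x..y, ψ t) :
    IsC1AbelSolution γ (fun x => (∫ t in p..x, ψ t) / ∫ t in p..γ p, ψ t)
      (fun x => ψ x / ∫ t in p..γ p, ψ t) (Ici p) := by
  set Φ : ℝ → ℝ := fun x => ∫ t in p..x, ψ t
  have hΦ : ∀ x, HasDerivAt Φ (ψ x) x := fun x =>
    (hψ.integral_hasStrictDerivAt p x).hasDerivAt
  have hc : 0 < Φ (γ p) := hψpos p (γ p) le_rfl hp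
  have hΦγ : ∀ x ∈ Ici p, Φ (γ x) - Φ x = Φ (γ p) := by
    intro x hx
    have hcont : ContinuousOn (fun x => Φ (γ x) - Φ x) (Icc p x) := fun z hz =>
      ((hΦ _).continuousAt.comp_continuousWithinAt
        ((hγ z hz.1).continuousWithinAt.mono Icc_subset_Ici_self)).sub
        (hΦ z).continuousAt.continuousWithinAt
    have hderiv : ∀ z ∈ Ico p x, HasDerivWithinAt (fun x => Φ (γ x) - Φ x) 0 (Ici z) z := by
      intro z hz
      have h := ((hΦ (γ z)).comp_hasDerivWithinAt z
        ((hγ z hz.1).mono (Ici_subset_Ici.2 hz.1))).sub (hΦ z).hasDerivWithinAt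
      rwa [hψγ z hz.1, sub_self] at h
    simpa [Φ] using constant_of_has_deriv_right_zero hcont hderiv x (right_mem_Icc.2 hx)
  refine ⟨fun x hx y _ hxy => ?_, fun x _ => (hΦ x).div_const _,
    (hψ.div_const _).continuousOn, fun x hx => ?_⟩
  · have h := hψpos x y hx hxy
    rw [← intervalIntegral.integral_interval_sub_left (a := p) (hψ.intervalIntegrable _ _)
      (hψ.intervalIntegrable _ _)] at h
    exact div_lt_div_of_pos_right (sub_pos.1 h) hc
  · show Φ (γ x) / Φ (γ p) = Φ x / Φ (γ p) + 1
    rw [← sub_eq_iff_eq_add', ← sub_div, hΦγ x hx, div_self hc.ne']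

namespace AbelDensity

variable (e : ℝ ≃o ℝ) (γ' : ℝ → ℝ) (p : ℝ)

noncomputable def weight (n : ℕ) (y : ℝ) : ℝ :=
  (y - p) * (e p - y) / iterateDeriv e γ' n y

noncomputable def piece (n : ℕ) (x : ℝ) : ℝ :=
  weight e γ' p n (max p (min (e p) (e.symm^[n] x)))

/-- The bump `(y - p) (e p - y)` on the fundamental domain `[p, e p]`, transported to
`[eⁿ p, eⁿ⁺¹ p]` by `e^[n]` as a density, i.e. divided by the derivative of `e^[n]`. Clamping
`e.symm^[n] x` to `[p, e p]` extends each piece by zero, as the bump vanishes at both ends. -/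
noncomputable def density (x : ℝ) : ℝ :=
  ∑ᶠ n, piece e γ' p n x

variable {e γ' p}

theorem weight_pos (hpos : ∀ x ∈ Ici p, 0 < γ' x) (hlt : ∀ x ∈ Ici p, x < e x) (n : ℕ)
    {y : ℝ} (hy : y ∈ Ioo p (e p)) : 0 < weight e γ' p n y :=
  div_pos (mul_pos (sub_pos.2 hy.1) (sub_pos.2 hy.2))
    (iterateDeriv_pos (mapsTo_Ici_of_lt hlt) hpos n hy.1.le)

theorem weight_nonneg (hpos : ∀ x ∈ Ici p, 0 < γ' x) (hlt : ∀ x ∈ Ici p, x < e x) (n : ℕ)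
    {y : ℝ} (hy : y ∈ Icc p (e p)) : 0 ≤ weight e γ' p n y :=
  div_nonneg (mul_nonneg (sub_nonneg.2 hy.1) (sub_nonneg.2 hy.2))
    (iterateDeriv_pos (mapsTo_Ici_of_lt hlt) hpos n hy.1).le

theorem weight_succ_mul {n : ℕ} {y : ℝ} (h : γ' (e^[n] y) ≠ 0) :
    weight e γ' p (n + 1) y * γ' (e^[n] y) = weight e γ' p n y := by
  rw [weight, weight, iterateDeriv_succ, div_mul_eq_mul_div, mul_div_mul_right _ _ h]

theorem continuousOn_weight (hγ' : ContinuousOn γ' (Ici p)) (hpos : ∀ x ∈ Ici p, 0 < γ' x)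
    (hlt : ∀ x ∈ Ici p, x < e x) (n : ℕ) : ContinuousOn (weight e γ' p n) (Ici p) :=
  ((continuousOn_id.sub continuousOn_const).mul (continuousOn_const.sub continuousOn_id)).div
    (continuousOn_iterateDeriv (mapsTo_Ici_of_lt hlt) e.continuous.continuousOn hγ' n)
    fun _ hy => (iterateDeriv_pos (mapsTo_Ici_of_lt hlt) hpos n hy).ne'

theorem continuous_piece (hγ' : ContinuousOn γ' (Ici p)) (hpos : ∀ x ∈ Ici p, 0 < γ' x)
    (hlt : ∀ x ∈ Ici p, x < e x) (n : ℕ) : Continuous (piece e γ' p n) :=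
  (continuousOn_weight hγ' hpos hlt n).comp_continuous
    (continuous_const.max (continuous_const.min (e.symm.continuous.iterate n)))
    fun _ => le_max_left p _

theorem piece_eq_weight {n : ℕ} {x : ℝ} (h : e.symm^[n] x ∈ Icc p (e p)) :
    piece e γ' p n x = weight e γ' p n (e.symm^[n] x) := by
  rw [piece, min_eq_right h.2, max_eq_right h.1]

theorem piece_eq_zero (hp : p ≤ e p) {n : ℕ} {x : ℝ} (h : e.symm^[n] x ∉ Ioo p (e p)) :
    piece e γ' p n x = 0 := by
  rcases le_or_gt (e.symm^[n] x) p with hx | hx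
  · simp [piece, weight, max_eq_left ((min_le_right _ _).trans hx)]
  · have hx' : e p ≤ e.symm^[n] x := not_lt.1 fun h' => h ⟨hx, h'⟩
    simp [piece, weight, min_eq_left hx', max_eq_right hp]

theorem piece_nonneg (hpos : ∀ x ∈ Ici p, 0 < γ' x) (hlt : ∀ x ∈ Ici p, x < e x) (n : ℕ)
    (x : ℝ) : 0 ≤ piece e γ' p n x :=
  weight_nonneg hpos hlt n ⟨le_max_left _ _,
    max_le (hlt p self_mem_Ici).le (min_le_left _ _)⟩

theorem mem_Ioo_of_piece_ne_zero (hp : p ≤ e p) {n : ℕ} {x : ℝ}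
    (h : piece e γ' p n x ≠ 0) : x ∈ Ioo (e^[n] p) (e^[n + 1] p) :=
  (e.symm_iterate_mem_Ioo_iff n).1 (not_not.1 (mt (piece_eq_zero hp) h))

theorem piece_succ_mul (hpos : ∀ x ∈ Ici p, 0 < γ' x) (hlt : ∀ x ∈ Ici p, x < e x)
    (n : ℕ) {x : ℝ} (hx : x ∈ Ici p) :
    piece e γ' p (n + 1) (e x) * γ' x = piece e γ' p n x := by
  have hp : p ≤ e p := (hlt p self_mem_Ici).le
  have hsymm : e.symm^[n + 1] (e x) = e.symm^[n] x := by
    rw [iterate_succ_apply, e.symm_apply_apply]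
  by_cases hy : e.symm^[n] x ∈ Ioo p (e p)
  · have hinv : e^[n] (e.symm^[n] x) = x := (RightInverse.iterate e.apply_symm_apply n) x
    have h := weight_succ_mul (e := e) (p := p) (n := n) (y := e.symm^[n] x)
      (by rw [hinv]; exact (hpos x hx).ne')
    rw [hinv] at h
    rw [piece_eq_weight (hsymm ▸ Ioo_subset_Icc_self hy),
      piece_eq_weight (Ioo_subset_Icc_self hy), hsymm, h]
  · rw [piece_eq_zero hp (hsymm ▸ hy), piece_eq_zero hp hy, zero_mul]

theorem locallyFinite_support_piece (hp : p ≤ e p)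
    (htop : Tendsto (fun n => e^[n] p) atTop atTop) :
    LocallyFinite fun n => support (piece e γ' p n) := by
  intro x
  refine ⟨Iio (x + 1), Iio_mem_nhds (lt_add_one x), ?_⟩
  have hfin : {n | ¬ x + 1 ≤ e^[n] p}.Finite := by
    rw [← eventually_cofinite, Nat.cofinite_eq_atTop]
    exact htop.eventually_ge_atTop (x + 1)
  refine hfin.subset fun n ⟨z, hz, hzx⟩ => ?_
  exact not_le.2 ((mem_Ioo_of_piece_ne_zero hp hz).1.trans hzx)

theorem continuous_density (hγ' : ContinuousOn γ' (Ici p)) (hpos : ∀ x ∈ Ici p, 0 < γ' x)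
    (hlt : ∀ x ∈ Ici p, x < e x) : Continuous (density e γ' p) :=
  continuous_finsum (continuous_piece hγ' hpos hlt)
    (locallyFinite_support_piece (hlt p self_mem_Ici).le
      (tendsto_iterate_atTop_of_lt e.continuous.continuousOn hlt))

theorem density_eq_piece (hp : p < e p) {n : ℕ} {x : ℝ}
    (hx : x ∈ Icc (e^[n] p) (e^[n + 1] p)) : density e γ' p x = piece e γ' p n x := by
  have hmono : StrictMono fun n => e^[n] p := strictMono_nat_of_lt_succ fun n => by
    rw [iterate_succ_apply]
    exact e.strictMono.iterate n hp
  refine finsum_eq_single _ n fun m hm => by_contra fun h => hm ?_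
  obtain ⟨h1, h2⟩ := mem_Ioo_of_piece_ne_zero hp.le h
  have : m < n + 1 := hmono.lt_iff_lt.1 (h1.trans_le hx.2)
  have : n < m + 1 := hmono.lt_iff_lt.1 (hx.1.trans_lt h2)
  omega

theorem density_mul (hpos : ∀ x ∈ Ici p, 0 < γ' x) (hlt : ∀ x ∈ Ici p, x < e x) {x : ℝ}
    (hx : x ∈ Ici p) : density e γ' p (e x) * γ' x = density e γ' p x := by
  have hp := hlt p self_mem_Ici
  obtain ⟨n, hn⟩ := exists_mem_Ico_of_tendsto_atTop
    (tendsto_iterate_atTop_of_lt e.continuous.continuousOn hlt) hx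
  have hen : e x ∈ Icc (e^[n + 1] p) (e^[n + 1 + 1] p) := by
    have h1 : e^[n + 1] p = e (e^[n] p) := iterate_succ_apply' _ _ _
    have h2 : e^[n + 1 + 1] p = e (e^[n + 1] p) := iterate_succ_apply' _ _ _
    rw [h2, h1]
    exact ⟨e.monotone hn.1, e.monotone (hn.2.le.trans_eq h1)⟩
  rw [density_eq_piece hp hen, density_eq_piece hp (Ico_subset_Icc_self hn),
    piece_succ_mul hpos hlt n hx]

theorem density_pos (hpos : ∀ x ∈ Ici p, 0 < γ' x) (hlt : ∀ x ∈ Ici p, x < e x) {n : ℕ}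
    {x : ℝ} (hx : x ∈ Ioo (e^[n] p) (e^[n + 1] p)) : 0 < density e γ' p x := by
  have hy := (e.symm_iterate_mem_Ioo_iff n).2 hx
  rw [density_eq_piece (hlt p self_mem_Ici) (Ioo_subset_Icc_self hx),
    piece_eq_weight (Ioo_subset_Icc_self hy)]
  exact weight_pos hpos hlt n hy

theorem integral_density_pos (hγ' : ContinuousOn γ' (Ici p)) (hpos : ∀ x ∈ Ici p, 0 < γ' x)
    (hlt : ∀ x ∈ Ici p, x < e x) {x y : ℝ} (hx : p ≤ x) (hxy : x < y) :
    0 < ∫ t in x..y, density e γ' p t := by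
  obtain ⟨n, hn⟩ := exists_mem_Ico_of_tendsto_atTop
    (tendsto_iterate_atTop_of_lt e.continuous.continuousOn hlt) hx
  have hm : x < min y (e^[n + 1] p) := lt_min hxy hn.2
  refine intervalIntegral.integral_pos hxy (continuous_density hγ' hpos hlt).continuousOn
    (fun t _ => finsum_nonneg fun n => piece_nonneg hpos hlt n t)
    ⟨(x + min y (e^[n + 1] p)) / 2, ⟨by linarith, by linarith [min_le_left y (e^[n + 1] p)]⟩,
      density_pos hpos hlt (n := n)
        ⟨by linarith [hn.1], by linarith [min_le_right y (e^[n + 1] p)]⟩⟩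

end AbelDensity

theorem tendsto_of_isLittleO_rpow_neg {g : ℝ → ℝ} {c δ : ℝ} (hδ : 0 < δ)
    (h : (fun x => g x - (1 + c * x ^ (-δ))) =o[atTop] fun x : ℝ => x ^ (-δ)) :
    Tendsto g atTop (𝓝 1) := by
  have hmain : Tendsto (fun x : ℝ => 1 + c * x ^ (-δ)) atTop (𝓝 1) := by
    simpa using ((tendsto_rpow_neg_atTop hδ).const_mul c).const_add 1
  simpa using (h.isBigO.trans_tendsto (tendsto_rpow_neg_atTop hδ)).add hmain

theorem exists_isC1AbelSolution_of_deriv_pos {γ γ' : ℝ → ℝ} {p : ℝ}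
    (hγ : ∀ x ∈ Ici p, HasDerivAt γ (γ' x) x) (hγ' : ContinuousOn γ' (Ici p))
    (hpos : ∀ x ∈ Ici p, 0 < γ' x) (hlt : ∀ x ∈ Ici p, x < γ x) :
    ∃ φ φ', IsC1AbelSolution γ φ φ' (Ici p) := by
  have hγc : ContinuousOn γ (Ici p) := fun x hx => (hγ x hx).continuousAt.continuousWithinAt
  have hmono : StrictMonoOn γ (Ici p) := strictMonoOn_of_deriv_pos (convex_Ici p) hγc
    fun x hx => by
      rw [interior_Ici] at hx
      rw [(hγ x (mem_Ici_of_Ioi hx)).deriv]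
      exact hpos x (mem_Ici_of_Ioi hx)
  obtain ⟨e, he⟩ := exists_orderIso_eqOn hγc hmono hlt
  have hlt' : ∀ x ∈ Ici p, x < e x := fun x hx => he hx ▸ hlt x hx
  exact ⟨_, _, isC1AbelSolution_of_density (fun x hx => (hγ x hx).hasDerivWithinAt)
    (hlt p self_mem_Ici) (AbelDensity.continuous_density hγ' hpos hlt')
    (fun x hx => he hx ▸ AbelDensity.density_mul hpos hlt' hx)
    fun _ _ hx hxy => AbelDensity.integral_density_pos hγ' hpos hlt' hx hxy⟩

theorem abel_equation_solution_parabolic_general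
    (a δ : ℝ) (hδ : 0 < δ)
    (γ γ' : ℝ → ℝ)
    (hγderiv : ∀ x ∈ Ici (-1:ℝ), HasDerivAt γ (γ' x) x)
    (hγ'cont : ContinuousOn γ' (Ici (-1:ℝ)))
    (hmono : StrictMonoOn γ (Ici (-1:ℝ)))
    (hfix : ∀ x ∈ Ici (-1:ℝ), x < γ x)
    (hasymp : (fun x => γ' x - (1 + a * (1 - δ) * x ^ (-δ))) =o[atTop]
        fun x : ℝ => x ^ (-δ)) :
    ∃ φ φ' : ℝ → ℝ,
      (∀ x ∈ Ici (-1:ℝ), 0 < φ x) ∧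
      StrictMonoOn φ (Ici (-1:ℝ)) ∧
      (∀ x ∈ Ici (-1:ℝ), HasDerivAt φ (φ' x) x) ∧
      ContinuousOn φ' (Ici (-1:ℝ)) ∧
      ∀ x ∈ Ici (-1:ℝ), φ (γ x) = φ x + 1 := by
  have hmaps : MapsTo γ (Ici (-1)) (Ici (-1)) := mapsTo_Ici_of_lt hfix
  have hγc : ContinuousOn γ (Ici (-1)) := fun x hx =>
    (hγderiv x hx).continuousAt.continuousWithinAt
  obtain ⟨M, hM⟩ := eventually_atTop.1
    ((tendsto_of_isLittleO_rpow_neg hδ hasymp).eventually (lt_mem_nhds one_pos))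
  obtain ⟨K, hK⟩ := ((tendsto_iterate_atTop_of_lt hγc hfix).eventually_ge_atTop M).exists
  set p := γ^[K] (-1)
  have hp : Ici p ⊆ Ici (-1) := Ici_subset_Ici.2 (hmaps.iterate K self_mem_Ici)
  have hst : MapsTo γ^[K] (Ici (-1)) (Ici p) := fun x hx =>
    (hmono.iterate hmaps K).monotoneOn self_mem_Ici hx hx
  obtain ⟨φ₀, φ₀', h₀⟩ := exists_isC1AbelSolution_of_deriv_pos
    (fun x hx => hγderiv x (hp hx)) (hγ'cont.mono hp) (fun x hx => hM x (hK.trans hx))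
    (fun x hx => hfix x (hp hx))
  have h := (h₀.comp_iterate hmaps K hst hγderiv hγ'cont hmono).add_const (1 - φ₀ p)
  refine ⟨_, _, fun x hx => ?_, h.strictMonoOn, h.hasDerivAt, h.continuousOn_deriv, h.abel⟩
  have hle := h.strictMonoOn.monotoneOn self_mem_Ici hx hx
  simp only [comp_apply] at hle ⊢
  linarith

theorem abel_equation_solution_parabolic
    (a δ : ℝ) (ha : 0 < a) (hδ : 0 < δ) (hδ1 : δ ≠ 1)
    (γ γ' : ℝ → ℝ)
    (hγderiv : ∀ x ∈ Ici (-1:ℝ), HasDerivAt γ (γ' x) x)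
    (hγ'cont : ContinuousOn γ' (Ici (-1:ℝ)))
    (hmono : StrictMonoOn γ (Ici (-1:ℝ)))
    (himg : γ '' Ici (-1:ℝ) = Ici (1:ℝ))
    (hγm1 : γ (-1) = 1)
    (hfix : ∀ x ∈ Ici (-1:ℝ), x < γ x)
    (hasymp : (fun x => γ' x - (1 + a * (1 - δ) * x ^ (-δ))) =o[atTop]
        fun x : ℝ => x ^ (-δ)) :
    ∃ φ φ' : ℝ → ℝ,
      (∀ x ∈ Ici (-1:ℝ), 0 < φ x) ∧
      StrictMonoOn φ (Ici (-1:ℝ)) ∧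
      (∀ x ∈ Ici (-1:ℝ), HasDerivAt φ (φ' x) x) ∧
      ContinuousOn φ' (Ici (-1:ℝ)) ∧
      ∀ x ∈ Ici (-1:ℝ), φ (γ x) = φ x + 1 :=
  abel_equation_solution_parabolic_general a δ hδ γ γ' hγderiv hγ'cont hmono hfix hasymp
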